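/- Let f : X → ℝ be measurable with |||f|||_β < ∞, and let h = ∫ f dμ*, where μ* is the unique P-invariant probability measure with ∫ V dμ* < ∞ (which coincides with the unique P^r-invariant one). Then the series u(x) = Σ_{n≥0} ((P^{*n} f)(x) − h) converges absolutely for every x, u solves the Poisson equation u(x) − (P*u)(x) = f(x) − h, any two solutions with finite ‖·‖_β differ by a constant, and there is a constant C > 0, depending only on r, γ_r, K_r, γ₁, K₁, β, α_r, such that |u(x)| ≤ C |||f|||_β (1 + βV(x)) for all x. -/

import Mathlib

/-!
One step of `P*` multiplies `|||·|||_β` by at most `3 + βK₁ + γ₁` (by the growth condition) and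
`r` steps contract it by `α_r`, so `|||P^{*n} f|||_β ≤ (3 + βK₁ + γ₁)^r α_r^⌊n/r⌋ |||f|||_β`.
Since `μ*` is invariant, `∫ P^{*n} f dμ* = h`, whence
`|P^{*n} f(x) - h| ≤ |||P^{*n} f|||_β (2 + β ∫ V dμ* + β V(x))`: a geometric bound giving absolute
convergence of the series, the weighted bound on `u`, and (by dominated term-by-term
integration against `P(x, ·)`, which shifts the series by one) the Poisson equation.
Two `‖·‖_β`-bounded solutions differ by a `P*`-invariant function of finite `|||·|||_β`, which
the `r`-step contraction forces to be constant.
-/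

open MeasureTheory ProbabilityTheory ENNReal

noncomputable section

namespace PoissonPaper

variable {X : Type*} [MeasurableSpace X]

/-- The weighted sup-norm `‖φ‖_β = sup_x |φ(x)| / (1 + β V(x))`, valued in `ℝ≥0∞`. -/
def wnorm (β : ℝ) (V : X → ℝ) (φ : X → ℝ) : ℝ≥0∞ :=
  ⨆ x, ENNReal.ofReal (|φ x| / (1 + β * V x))

open Classical in
/-- The metric `d_β(x,y) = 2 + βV(x) + βV(y)` for `x ≠ y`, `0` on the diagonal. -/
def dBeta (β : ℝ) (V : X → ℝ) (x y : X) : ℝ :=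
  if x = y then 0 else 2 + β * V x + β * V y

/-- The oscillation seminorm `|||φ|||_β = sup_{x ≠ y} |φ(x) - φ(y)| / d_β(x,y)`,
valued in `ℝ≥0∞`.  (For `x = y` the quotient is `0/0 = 0`, so the diagonal does
not contribute.) -/
def osc (β : ℝ) (V : X → ℝ) (φ : X → ℝ) : ℝ≥0∞ :=
  ⨆ x, ⨆ y, ENNReal.ofReal (|φ x - φ y| / dBeta β V x y)

/-- Action of a kernel on functions: `(P*φ)(x) = ∫ φ(y) P(x,dy)`. -/
def act (P : Kernel X X) (φ : X → ℝ) : X → ℝ := fun x => ∫ y, φ y ∂(P x)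

/-- Drift inequality `(P*V)(x) ≤ γ V(x) + K`, with the integral taken in the
lower-integral sense (recall `V ≥ 0`). -/
def Drift (P : Kernel X X) (V : X → ℝ) (γ K : ℝ) : Prop :=
  ∀ x, ∫⁻ y, ENNReal.ofReal (V y) ∂(P x) ≤ ENNReal.ofReal (γ * V x + K)

instance bindIsFinite (μ : Measure X) [IsFiniteMeasure μ] (P : Kernel X X) [IsMarkovKernel P] :
    IsFiniteMeasure (μ.bind P) := by
  constructor
  rw [Measure.bind_apply MeasurableSet.univ (Kernel.measurable P).aemeasurable]
  calc ∫⁻ x, (P x) Set.univ ∂μ = ∫⁻ _, 1 ∂μ := by simp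
    _ = μ Set.univ := by simp
    _ < ⊤ := measure_lt_top μ _

/-- The total variation measure `|μ₁ - μ₂|` of the difference of two finite measures. -/
def tv (μ₁ μ₂ : Measure X) [IsFiniteMeasure μ₁] [IsFiniteMeasure μ₂] : Measure X :=
  (μ₁.toSignedMeasure - μ₂.toSignedMeasure).totalVariation

/-- `σ_β(μ₁, μ₂) = ∫ (1 + βV) d|μ₁ - μ₂|`. -/
def sigmaB (β : ℝ) (V : X → ℝ) (μ₁ μ₂ : Measure X) [IsFiniteMeasure μ₁] [IsFiniteMeasure μ₂] :
    ℝ :=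
  ∫ x, (1 + β * V x) ∂(tv μ₁ μ₂)

/-- `σ_β(η) = ∫ (1 + βV) d|η|` for a finite signed measure `η`. -/
def sigmaS (β : ℝ) (V : X → ℝ) (η : SignedMeasure X) : ℝ :=
  ∫ x, (1 + β * V x) ∂(η.totalVariation)

/-- `n`-fold iterate (power) of a kernel. -/
def kpow (P : Kernel X X) : ℕ → Kernel X X
  | 0 => Kernel.id
  | n + 1 => P ∘ₖ kpow P n

instance kpowIsMarkov (P : Kernel X X) [IsMarkovKernel P] : ∀ n, IsMarkovKernel (kpow P n)
  | 0 => by rw [kpow]; infer_instance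
  | n + 1 => by have := kpowIsMarkov P n; rw [kpow]; infer_instance

/-- Action of a (Markov) kernel on finite signed measures, via the Jordan decomposition. -/
def sbind (P : Kernel X X) [IsMarkovKernel P] (η : SignedMeasure X) : SignedMeasure X :=
  (η.toJordanDecomposition.posPart.bind P).toSignedMeasure -
    (η.toJordanDecomposition.negPart.bind P).toSignedMeasure

set_option linter.unusedSectionVars false

def DBetaLipschitzWith (β : ℝ) (V : X → ℝ) (ℓ : ℝ) (φ : X → ℝ) : Prop :=
  ∀ x y, |φ x - φ y| ≤ ℓ * dBeta β V x y

def OscContracts (β : ℝ) (V : X → ℝ) (P : Kernel X X) (r : ℕ) (α : ℝ) : Prop :=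
  ∀ ψ : X → ℝ, Measurable ψ → osc β V ψ < ⊤ →
    osc β V ((act P)^[r] ψ) ≤ ENNReal.ofReal α * osc β V ψ

section Weighted

variable {V : X → ℝ} {β ℓ : ℝ} {φ : X → ℝ}

lemma dBeta_of_ne {x y : X} (h : x ≠ y) : dBeta β V x y = 2 + β * V x + β * V y := by
  simp [dBeta, h]

lemma dBeta_le (hV0 : ∀ x, 0 ≤ V x) (hβ : 0 ≤ β) (x y : X) :
    dBeta β V x y ≤ 2 + β * V x + β * V y := by
  by_cases h : x = y
  · rw [h, dBeta, if_pos rfl]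
    linarith [mul_nonneg hβ (hV0 y)]
  · exact (dBeta_of_ne h).le

lemma dBeta_nonneg (hV0 : ∀ x, 0 ≤ V x) (hβ : 0 ≤ β) (x y : X) : 0 ≤ dBeta β V x y := by
  by_cases h : x = y
  · simp [dBeta, h]
  · rw [dBeta_of_ne h]
    linarith [mul_nonneg hβ (hV0 x), mul_nonneg hβ (hV0 y)]

lemma dBeta_pos (hV0 : ∀ x, 0 ≤ V x) (hβ : 0 ≤ β) {x y : X} (h : x ≠ y) :
    0 < dBeta β V x y := by
  rw [dBeta_of_ne h]
  linarith [mul_nonneg hβ (hV0 x), mul_nonneg hβ (hV0 y)]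

lemma osc_le_ofReal_iff (hV0 : ∀ x, 0 ≤ V x) (hβ : 0 ≤ β) (hℓ : 0 ≤ ℓ) :
    osc β V φ ≤ ENNReal.ofReal ℓ ↔ DBetaLipschitzWith β V ℓ φ := by
  simp only [osc, iSup_le_iff, DBetaLipschitzWith]
  refine forall₂_congr fun x y => ?_
  by_cases h : x = y
  · simp [h, dBeta]
  · rw [ENNReal.ofReal_le_ofReal_iff hℓ, div_le_iff₀ (dBeta_pos hV0 hβ h)]

lemma dBetaLipschitzWith_toReal_osc (hV0 : ∀ x, 0 ≤ V x) (hβ : 0 ≤ β)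
    (h : osc β V φ < ⊤) : DBetaLipschitzWith β V (osc β V φ).toReal φ :=
  (osc_le_ofReal_iff hV0 hβ ENNReal.toReal_nonneg).mp (ENNReal.ofReal_toReal h.ne).ge

lemma eq_of_osc_eq_zero (hV0 : ∀ x, 0 ≤ V x) (hβ : 0 ≤ β) (h : osc β V φ = 0) (x y : X) :
    φ x = φ y := by
  have h0 := (osc_le_ofReal_iff hV0 hβ le_rfl).mp (h.trans ENNReal.ofReal_zero.symm).le x y
  rwa [zero_mul, abs_nonpos_iff, sub_eq_zero] at h0

lemma abs_le_toReal_wnorm_mul (hV0 : ∀ x, 0 ≤ V x) (hβ : 0 ≤ β) (h : wnorm β V φ < ⊤)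
    (x : X) : |φ x| ≤ (wnorm β V φ).toReal * (1 + β * V x) := by
  have hpos : 0 < 1 + β * V x := by linarith [mul_nonneg hβ (hV0 x)]
  rw [← div_le_iff₀ hpos, ← ENNReal.ofReal_le_iff_le_toReal h.ne]
  exact le_iSup (fun x => ENNReal.ofReal (|φ x| / (1 + β * V x))) x

namespace DBetaLipschitzWith

lemma osc_lt_top (hV0 : ∀ x, 0 ≤ V x) (hβ : 0 ≤ β) (hℓ : 0 ≤ ℓ)
    (h : DBetaLipschitzWith β V ℓ φ) : osc β V φ < ⊤ :=
  ((osc_le_ofReal_iff hV0 hβ hℓ).mpr h).trans_lt ENNReal.ofReal_lt_top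

lemma mono (hV0 : ∀ x, 0 ≤ V x) (hβ : 0 ≤ β) {ℓ' : ℝ} (h : DBetaLipschitzWith β V ℓ φ)
    (hle : ℓ ≤ ℓ') : DBetaLipschitzWith β V ℓ' φ := fun x y =>
  (h x y).trans (mul_le_mul_of_nonneg_right hle (dBeta_nonneg hV0 hβ x y))

lemma of_abs_le {c : ℝ} (h : ∀ x, |φ x| ≤ c * (1 + β * V x)) :
    DBetaLipschitzWith β V c φ := by
  intro x y
  by_cases hxy : x = y
  · simp [hxy, dBeta]
  · rw [dBeta_of_ne hxy]
    linarith [abs_sub (φ x) (φ y), h x, h y]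

lemma abs_sub_le (hV0 : ∀ x, 0 ≤ V x) (hβ : 0 ≤ β) (hℓ : 0 ≤ ℓ)
    (h : DBetaLipschitzWith β V ℓ φ) (x y : X) :
    |φ x - φ y| ≤ ℓ * (2 + β * V x) + ℓ * β * V y := by
  linarith [(h x y).trans (mul_le_mul_of_nonneg_left (dBeta_le hV0 hβ x y) hℓ)]

lemma abs_le (hV0 : ∀ x, 0 ≤ V x) (hβ : 0 ≤ β) (hℓ : 0 ≤ ℓ)
    (h : DBetaLipschitzWith β V ℓ φ) (x₀ y : X) :
    |φ y| ≤ (|φ x₀| + ℓ * (2 + β * V x₀)) + ℓ * β * V y := by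
  linarith [abs_sub_abs_le_abs_sub (φ y) (φ x₀), abs_sub_comm (φ y) (φ x₀),
    h.abs_sub_le hV0 hβ hℓ x₀ y]

end DBetaLipschitzWith

end Weighted

section Integrals

variable {V : X → ℝ} {β ℓ a b : ℝ} {φ : X → ℝ} {ν : Measure X}

lemma integrable_of_abs_le_affine [IsFiniteMeasure ν] (hVint : Integrable V ν)
    (hφ : AEStronglyMeasurable φ ν) (h : ∀ y, |φ y| ≤ a + b * V y) : Integrable φ ν :=
  ((integrable_const a).add (hVint.const_mul b)).mono' hφ (.of_forall h)

lemma integral_affine [IsProbabilityMeasure ν] (hVint : Integrable V ν) (a b : ℝ) :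
    ∫ y, (a + b * V y) ∂ν = a + b * ∫ y, V y ∂ν := by
  rw [integral_add (integrable_const a) (hVint.const_mul b), integral_const, integral_const_mul]
  simp

lemma integral_abs_le_of_abs_le_affine [IsProbabilityMeasure ν] (hVint : Integrable V ν)
    (hφ : AEStronglyMeasurable φ ν) (h : ∀ y, |φ y| ≤ a + b * V y) :
    ∫ y, |φ y| ∂ν ≤ a + b * ∫ y, V y ∂ν := by
  rw [← integral_affine hVint]
  exact integral_mono (integrable_of_abs_le_affine hVint hφ h).abs
    ((integrable_const a).add (hVint.const_mul b)) h

lemma integrable_of_wnorm_lt_top [IsFiniteMeasure ν] (hV0 : ∀ x, 0 ≤ V x) (hβ : 0 ≤ β)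
    (hVint : Integrable V ν) (hφ : AEStronglyMeasurable φ ν) (h : wnorm β V φ < ⊤) :
    Integrable φ ν :=
  integrable_of_abs_le_affine (a := (wnorm β V φ).toReal) (b := (wnorm β V φ).toReal * β)
    hVint hφ fun y => (abs_le_toReal_wnorm_mul hV0 hβ h y).trans_eq (by ring)

lemma integral_tsum_of_abs_le [IsProbabilityMeasure ν] (hVint : Integrable V ν)
    {g : ℕ → X → ℝ} (hg : ∀ n, AEStronglyMeasurable (g n) ν) {c : ℕ → ℝ} (hc : Summable c)
    (h : ∀ n y, |g n y| ≤ c n * (a + b * V y)) :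
    ∫ y, ∑' n, g n y ∂ν = ∑' n, ∫ y, g n y ∂ν := by
  have h' n y : |g n y| ≤ c n * a + c n * b * V y := (h n y).trans_eq (by ring)
  refine (integral_tsum_of_summable_integral_norm
    (fun n => integrable_of_abs_le_affine hVint (hg n) (h' n)) ?_).symm
  refine (hc.mul_right (a + b * ∫ y, V y ∂ν)).of_nonneg_of_le
    (fun n => integral_nonneg fun _ => norm_nonneg _) fun n => ?_
  exact (integral_abs_le_of_abs_le_affine hVint (hg n) (h' n)).trans_eq (by ring)

namespace DBetaLipschitzWith

lemma integrable (hV0 : ∀ x, 0 ≤ V x) (hβ : 0 ≤ β) (hℓ : 0 ≤ ℓ)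
    (h : DBetaLipschitzWith β V ℓ φ) (hφ : AEStronglyMeasurable φ ν) [IsProbabilityMeasure ν]
    (hVint : Integrable V ν) : Integrable φ ν :=
  have ⟨x₀⟩ := nonempty_of_isProbabilityMeasure ν
  integrable_of_abs_le_affine hVint hφ (h.abs_le hV0 hβ hℓ x₀)

lemma abs_integral_sub_le (hV0 : ∀ x, 0 ≤ V x) (hβ : 0 ≤ β) (hℓ : 0 ≤ ℓ)
    (h : DBetaLipschitzWith β V ℓ φ) (hφ : AEStronglyMeasurable φ ν) [IsProbabilityMeasure ν]
    (hVint : Integrable V ν) (x : X) :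
    |∫ y, φ y ∂ν - φ x| ≤ ℓ * (2 + β * V x) + ℓ * β * ∫ y, V y ∂ν := by
  have hsub : ∫ y, φ y ∂ν - φ x = ∫ y, (φ y - φ x) ∂ν := by
    rw [integral_sub (h.integrable hV0 hβ hℓ hφ hVint) (integrable_const _), integral_const]
    simp
  rw [hsub]
  refine abs_integral_le_integral_abs.trans <|
    integral_abs_le_of_abs_le_affine hVint (hφ.sub aestronglyMeasurable_const) fun y => ?_
  rw [abs_sub_comm]
  exact h.abs_sub_le hV0 hβ hℓ x y

end DBetaLipschitzWith

end Integrals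

namespace Drift

variable {P : Kernel X X} {V : X → ℝ} {γ K : ℝ}

lemma integrable (hV0 : ∀ x, 0 ≤ V x) (hVmeas : Measurable V) (h : Drift P V γ K) (x : X) :
    Integrable V (P x) :=
  ⟨hVmeas.aestronglyMeasurable, (hasFiniteIntegral_iff_ofReal (.of_forall hV0)).mpr
    ((h x).trans_lt ENNReal.ofReal_lt_top)⟩

lemma integral_le (hV0 : ∀ x, 0 ≤ V x) (hVmeas : Measurable V) (hγ : 0 ≤ γ) (hK : 0 ≤ K)
    (h : Drift P V γ K) (x : X) : ∫ y, V y ∂(P x) ≤ γ * V x + K := by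
  rw [integral_eq_lintegral_of_nonneg_ae (.of_forall hV0) hVmeas.aestronglyMeasurable,
    ← ENNReal.toReal_ofReal (add_nonneg (mul_nonneg hγ (hV0 x)) hK)]
  exact ENNReal.toReal_mono ENNReal.ofReal_ne_top (h x)

end Drift

section Action

variable {P : Kernel X X} [IsMarkovKernel P] {φ : X → ℝ}

lemma measurable_act (hφ : Measurable φ) : Measurable (act P φ) :=
  have hφ' : StronglyMeasurable (Function.uncurry fun (_ : X) (y : X) => φ y) :=
    (hφ.comp measurable_snd).stronglyMeasurable
  (hφ'.integral_kernel_prod_right (κ := P)).measurable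

lemma measurable_iterate_act (hφ : Measurable φ) (n : ℕ) : Measurable ((act P)^[n] φ) := by
  induction n with
  | zero => exact hφ
  | succ n ih => rw [Function.iterate_succ_apply']; exact measurable_act ih

lemma integral_act_of_integrable_bind {μ : Measure X} [IsFiniteMeasure μ]
    (hφ : Integrable φ (μ.bind P)) : ∫ x, act P φ x ∂μ = ∫ y, φ y ∂(μ.bind P) := by
  rw [Measure.comp_eq_comp_const_apply] at hφ ⊢
  rw [Kernel.integral_comp hφ, Kernel.const_apply]
  rfl

lemma integral_iterate_act_of_bind_eq {μ : Measure X} [IsFiniteMeasure μ] (hμ : μ.bind P = μ)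
    (hint : ∀ n, Integrable ((act P)^[n] φ) μ) (n : ℕ) :
    ∫ x, (act P)^[n] φ x ∂μ = ∫ x, φ x ∂μ := by
  induction n with
  | zero => rfl
  | succ n ih =>
    have hint' : Integrable ((act P)^[n] φ) (μ.bind P) := by rw [hμ]; exact hint n
    rw [Function.iterate_succ_apply', integral_act_of_integrable_bind hint', hμ, ih]

end Action

section Propagation

variable {P : Kernel X X} [IsMarkovKernel P] {V : X → ℝ} {β ℓ γ K : ℝ} {φ : X → ℝ}

namespace DBetaLipschitzWith

lemma abs_act_sub_le (hV0 : ∀ x, 0 ≤ V x) (hVmeas : Measurable V) (hβ : 0 ≤ β) (hγ : 0 ≤ γ)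
    (hK : 0 ≤ K) (hdrift : Drift P V γ K) (hℓ : 0 ≤ ℓ) (hφ : Measurable φ)
    (h : DBetaLipschitzWith β V ℓ φ) (x : X) :
    |act P φ x - φ x| ≤ ℓ * (2 + β * V x) + ℓ * β * (γ * V x + K) :=
  (h.abs_integral_sub_le hV0 hβ hℓ hφ.aestronglyMeasurable
    (hdrift.integrable hV0 hVmeas x) x).trans <| add_le_add le_rfl <|
      mul_le_mul_of_nonneg_left (hdrift.integral_le hV0 hVmeas hγ hK x) (mul_nonneg hℓ hβ)

lemma act_of_drift (hV0 : ∀ x, 0 ≤ V x) (hVmeas : Measurable V) (hβ : 0 ≤ β) (hγ : 0 ≤ γ)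
    (hK : 0 ≤ K) (hdrift : Drift P V γ K) (hℓ : 0 ≤ ℓ) (hφ : Measurable φ)
    (h : DBetaLipschitzWith β V ℓ φ) :
    DBetaLipschitzWith β V ((3 + β * K + γ) * ℓ) (act P φ) := by
  intro x y
  by_cases hxy : x = y
  · simp [hxy, dBeta]
  have hx := h.abs_act_sub_le hV0 hVmeas hβ hγ hK hdrift hℓ hφ x
  have hy := h.abs_act_sub_le hV0 hVmeas hβ hγ hK hdrift hℓ hφ y
  have hφxy := h x y
  rw [dBeta_of_ne hxy] at hφxy ⊢
  have hβx := mul_nonneg hβ (hV0 x)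
  have hβy := mul_nonneg hβ (hV0 y)
  have hβK := mul_nonneg hβ hK
  calc |act P φ x - act P φ y| ≤ |act P φ x - φ x| + |φ x - φ y| + |act P φ y - φ y| := by
        linarith [_root_.abs_sub_le (act P φ x) (φ x) (act P φ y),
          _root_.abs_sub_le (φ x) (φ y) (act P φ y),
          abs_sub_comm (φ y) (act P φ y)]
    _ ≤ (3 + β * K + γ) * ℓ * (2 + β * V x + β * V y) := by
        nlinarith [mul_nonneg hℓ hγ, mul_nonneg hℓ hβx, mul_nonneg hℓ hβy,
          mul_nonneg (mul_nonneg hℓ hβK) hβx, mul_nonneg (mul_nonneg hℓ hβK) hβy]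

lemma iterate_act (hV0 : ∀ x, 0 ≤ V x) (hVmeas : Measurable V) (hβ : 0 ≤ β) (hγ : 0 ≤ γ)
    (hK : 0 ≤ K) (hdrift : Drift P V γ K) (hℓ : 0 ≤ ℓ) (hφ : Measurable φ)
    (h : DBetaLipschitzWith β V ℓ φ) (n : ℕ) :
    DBetaLipschitzWith β V ((3 + β * K + γ) ^ n * ℓ) ((act P)^[n] φ) := by
  have hM : 0 ≤ 3 + β * K + γ := by linarith [mul_nonneg hβ hK]
  induction n with
  | zero => simpa using h
  | succ n ih =>
    rw [Function.iterate_succ_apply', pow_succ', mul_assoc]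
    exact ih.act_of_drift hV0 hVmeas hβ hγ hK hdrift (mul_nonneg (pow_nonneg hM n) hℓ)
      (measurable_iterate_act hφ n)

lemma iterate_act_mul_of_osc_le (hV0 : ∀ x, 0 ≤ V x) (hβ : 0 ≤ β) {r : ℕ} {α : ℝ} (hα : 0 ≤ α)
    (hosc : OscContracts β V P r α)
    (hℓ : 0 ≤ ℓ) (hφ : Measurable φ) (h : DBetaLipschitzWith β V ℓ φ) (q : ℕ) :
    DBetaLipschitzWith β V (α ^ q * ℓ) ((act P)^[r * q] φ) := by
  induction q with
  | zero => simpa using h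
  | succ q ih =>
    have hℓq : 0 ≤ α ^ q * ℓ := by positivity
    rw [show r * (q + 1) = r + r * q by ring, Function.iterate_add_apply,
      ← osc_le_ofReal_iff hV0 hβ (by positivity)]
    rw [← osc_le_ofReal_iff hV0 hβ hℓq] at ih
    calc osc β V ((act P)^[r] ((act P)^[r * q] φ))
        ≤ ENNReal.ofReal α * osc β V ((act P)^[r * q] φ) :=
          hosc _ (measurable_iterate_act hφ _) (ih.trans_lt ENNReal.ofReal_lt_top)
      _ ≤ ENNReal.ofReal α * ENNReal.ofReal (α ^ q * ℓ) := by gcongr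
      _ = ENNReal.ofReal (α ^ (q + 1) * ℓ) := by rw [← ENNReal.ofReal_mul hα]; ring_nf

lemma iterate_act_le_pow_div (hV0 : ∀ x, 0 ≤ V x) (hVmeas : Measurable V) (hβ : 0 ≤ β)
    (hγ : 0 ≤ γ) (hK : 0 ≤ K) (hdrift : Drift P V γ K) {r : ℕ} (hr : 0 < r) {α : ℝ}
    (hα : 0 ≤ α)
    (hosc : OscContracts β V P r α)
    (hℓ : 0 ≤ ℓ) (hφ : Measurable φ) (h : DBetaLipschitzWith β V ℓ φ) (n : ℕ) :
    DBetaLipschitzWith β V ((3 + β * K + γ) ^ r * α ^ (n / r) * ℓ) ((act P)^[n] φ) := by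
  have hM : 1 ≤ 3 + β * K + γ := by linarith [mul_nonneg hβ hK]
  have hsplit : (act P)^[n] φ = (act P)^[n % r] ((act P)^[r * (n / r)] φ) := by
    rw [← Function.iterate_add_apply, Nat.mod_add_div]
  rw [hsplit, mul_assoc]
  refine ((h.iterate_act_mul_of_osc_le hV0 hβ hα hosc hℓ hφ (n / r)).iterate_act hV0 hVmeas hβ
    hγ hK hdrift (by positivity) (measurable_iterate_act hφ _) (n % r)).mono hV0 hβ ?_
  exact mul_le_mul_of_nonneg_right (pow_le_pow_right₀ hM (Nat.mod_lt n hr).le) (by positivity)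

end DBetaLipschitzWith

end Propagation

lemma abs_tsum_le_of_abs_le {g ℓ : ℕ → ℝ} (hℓ : Summable ℓ) (hℓ0 : ∀ n, 0 ≤ ℓ n) {s t : ℝ}
    (hs : 0 ≤ s) (ht : 0 ≤ t) (h : ∀ n, |g n| ≤ ℓ n * ((2 + s) + t)) :
    |∑' n, g n| ≤ (∑' n, ℓ n) * (2 + s) * (1 + t) := by
  have hsum : |∑' n, g n| ≤ (∑' n, ℓ n) * ((2 + s) + t) :=
    (Real.norm_eq_abs _).symm.trans_le (tsum_of_norm_bounded (hℓ.hasSum.mul_right _) h)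
  have hS : 0 ≤ ∑' n, ℓ n := tsum_nonneg hℓ0
  nlinarith [mul_nonneg hS (mul_nonneg hs ht)]

lemma summable_pow_div {α : ℝ} (h0 : 0 ≤ α) (h1 : α < 1) {r : ℕ} (hr : 0 < r) :
    Summable fun n : ℕ => α ^ (n / r) := by
  have : NeZero r := ⟨hr.ne'⟩
  have hprod : Summable fun p : ℕ × Fin r => α ^ p.1 * 1 :=
    (summable_geometric_of_lt_one h0 h1).mul_of_nonneg
      (Summable.of_finite (f := fun _ : Fin r => (1 : ℝ))) (fun _ => pow_nonneg h0 _)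
      fun _ => zero_le_one
  simp only [mul_one] at hprod
  exact (Nat.divModEquiv r).summable_iff.mpr hprod

section Poisson

variable {P : Kernel X X} [IsMarkovKernel P] {V : X → ℝ} {β γ K : ℝ} {φ : X → ℝ}

lemma abs_iterate_act_sub_integral_le (hV0 : ∀ x, 0 ≤ V x) (hβ : 0 ≤ β) {μ : Measure X}
    [IsProbabilityMeasure μ] (hVint : Integrable V μ) (hμ : μ.bind P = μ) (hφ : Measurable φ)
    {ℓ : ℕ → ℝ} (hℓ : ∀ n, 0 ≤ ℓ n) (hlip : ∀ n, DBetaLipschitzWith β V (ℓ n) ((act P)^[n] φ))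
    (n : ℕ) (x : X) :
    |(act P)^[n] φ x - ∫ y, φ y ∂μ| ≤ ℓ n * ((2 + β * ∫ y, V y ∂μ) + β * V x) := by
  have hint n : Integrable ((act P)^[n] φ) μ :=
    (hlip n).integrable hV0 hβ (hℓ n) (measurable_iterate_act hφ n).aestronglyMeasurable hVint
  rw [← integral_iterate_act_of_bind_eq hμ hint n, abs_sub_comm]
  exact ((hlip n).abs_integral_sub_le hV0 hβ (hℓ n)
    (measurable_iterate_act hφ n).aestronglyMeasurable hVint x).trans_eq (by ring)

lemma tsum_iterate_act_sub_act_tsum (hV0 : ∀ x, 0 ≤ V x) (hVmeas : Measurable V)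
    (hdrift : Drift P V γ K) (hφ : Measurable φ) {c a b : ℝ} {ℓ : ℕ → ℝ} (hℓ : Summable ℓ)
    (h : ∀ n y, |(act P)^[n] φ y - c| ≤ ℓ n * (a + b * V y)) (x : X) :
    ∑' n, ((act P)^[n] φ x - c) - act P (fun z => ∑' n, ((act P)^[n] φ z - c)) x = φ x - c := by
  have hVx := hdrift.integrable hV0 hVmeas x
  have hg n : AEStronglyMeasurable (fun y => (act P)^[n] φ y - c) (P x) :=
    ((measurable_iterate_act hφ n).sub measurable_const).aestronglyMeasurable
  have hshift n : ∫ y, ((act P)^[n] φ y - c) ∂(P x) = (act P)^[n + 1] φ x - c := by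
    have hint : Integrable ((act P)^[n] φ) (P x) := by
      have hbound y : |(act P)^[n] φ y - c| ≤ ℓ n * a + ℓ n * b * V y :=
        (h n y).trans_eq (by ring)
      simpa [sub_eq_add_neg, integrable_add_const_iff] using
        integrable_of_abs_le_affine hVx (hg n) hbound
    rw [integral_sub hint (integrable_const c), integral_const, Function.iterate_succ_apply']
    simp [act]
  have hsum : Summable fun n => (act P)^[n] φ x - c :=
    (hℓ.mul_right _).of_norm_bounded (h · x)
  rw [act, integral_tsum_of_abs_le hVx hg hℓ h, tsum_congr hshift, hsum.tsum_eq_zero_add]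
  simp

lemma exists_eq_add_const_of_sub_act_eq (hV0 : ∀ x, 0 ≤ V x) (hVmeas : Measurable V)
    (hβ : 0 ≤ β) (hdrift : Drift P V γ K) {r : ℕ} {α : ℝ} (hα : α < 1)
    (hosc : OscContracts β V P r α)
    {u₁ u₂ : X → ℝ} (hm₁ : Measurable u₁) (hm₂ : Measurable u₂) (hw₁ : wnorm β V u₁ < ⊤)
    (hw₂ : wnorm β V u₂ < ⊤) (he : ∀ x, u₁ x - act P u₁ x = u₂ x - act P u₂ x) :
    ∃ c : ℝ, ∀ x, u₂ x = u₁ x + c := by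
  set w := fun x => u₂ x - u₁ x
  have hlip : DBetaLipschitzWith β V ((wnorm β V u₁).toReal + (wnorm β V u₂).toReal) w :=
    .of_abs_le fun x => by
      linarith [abs_sub (u₂ x) (u₁ x), abs_le_toReal_wnorm_mul hV0 hβ hw₁ x,
        abs_le_toReal_wnorm_mul hV0 hβ hw₂ x]
  have hfix : act P w = w := funext fun x => by
    have hVx := hdrift.integrable hV0 hVmeas x
    rw [act, integral_sub (integrable_of_wnorm_lt_top hV0 hβ hVx hm₂.aestronglyMeasurable hw₂)
      (integrable_of_wnorm_lt_top hV0 hβ hVx hm₁.aestronglyMeasurable hw₁)]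
    linarith [he x, show act P u₁ x = ∫ y, u₁ y ∂(P x) from rfl,
      show act P u₂ x = ∫ y, u₂ y ∂(P x) from rfl]
  have hfin : osc β V w < ⊤ := hlip.osc_lt_top hV0 hβ (by positivity)
  have hcontr := hosc w (hm₂.sub hm₁) hfin
  rw [Function.iterate_fixed hfix] at hcontr
  have hosc0 : osc β V w = 0 := by
    by_contra hne
    have hlt := ENNReal.mul_lt_mul_left hne hfin.ne (ENNReal.ofReal_lt_one.mpr hα)
    rw [one_mul] at hlt
    exact hlt.not_ge hcontr
  rcases isEmpty_or_nonempty X with hX | ⟨⟨x₀⟩⟩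
  · exact ⟨0, isEmptyElim⟩
  · refine ⟨w x₀, fun x => ?_⟩
    linarith [eq_of_osc_eq_zero hV0 hβ hosc0 x x₀]

end Poisson

theorem poisson_equation_solution_relaxed_general
    {X : Type*} [MeasurableSpace X] (V : X → ℝ) (hVmeas : Measurable V)
    (hV0 : ∀ x, 0 ≤ V x) (β : ℝ) (hβ : 0 < β)
    (P : Kernel X X) [IsMarkovKernel P]
    (r : ℕ) (hr : 0 < r)
    (γr : ℝ) (hγr : γr ∈ Set.Ioo (0:ℝ) 1)
    (γ₁ K₁ : ℝ) (hγ₁ : 1 < γ₁) (hK₁ : 0 ≤ K₁) (hgrow : Drift P V γ₁ K₁)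
    (α_r : ℝ) (hαr : α_r ∈ Set.Ioo γr 1)
    (hosc_r : ∀ φ : X → ℝ, Measurable φ → osc β V φ < ⊤ →
      osc β V ((act P)^[r] φ) ≤ ENNReal.ofReal α_r * osc β V φ)
    (μst : Measure X) [IsProbabilityMeasure μst] (hμint : Integrable V μst)
    (hμinv : μst.bind P = μst)
    (f : X → ℝ) (hf : Measurable f) (hffin : osc β V f < ⊤) :
    (∀ x, Summable fun n : ℕ => |(act P)^[n] f x - ∫ y, f y ∂μst|) ∧
    (∀ x, (∑' n : ℕ, ((act P)^[n] f x - ∫ y, f y ∂μst))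
        - act P (fun z => ∑' n : ℕ, ((act P)^[n] f z - ∫ y, f y ∂μst)) x
        = f x - ∫ y, f y ∂μst) ∧
    (∀ u₁ u₂ : X → ℝ, Measurable u₁ → Measurable u₂ →
      wnorm β V u₁ < ⊤ → wnorm β V u₂ < ⊤ →
      (∀ x, u₁ x - act P u₁ x = f x - ∫ y, f y ∂μst) →
      (∀ x, u₂ x - act P u₂ x = f x - ∫ y, f y ∂μst) →
      ∃ c : ℝ, ∀ x, u₂ x = u₁ x + c) ∧
    (∃ C : ℝ, 0 < C ∧ ∀ x, |∑' n : ℕ, ((act P)^[n] f x - ∫ y, f y ∂μst)| ≤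
      C * (osc β V f).toReal * (1 + β * V x)) := by
  have hα0 : 0 ≤ α_r := hγr.1.le.trans hαr.1.le
  have hγ₁0 : 0 ≤ γ₁ := zero_le_one.trans hγ₁.le
  set ℓ : ℕ → ℝ := fun n => (3 + β * K₁ + γ₁) ^ r * α_r ^ (n / r) * (osc β V f).toReal
  have hℓ0 n : 0 ≤ ℓ n := by positivity
  have hlip n : DBetaLipschitzWith β V (ℓ n) ((act P)^[n] f) :=
    (dBetaLipschitzWith_toReal_osc hV0 hβ.le hffin).iterate_act_le_pow_div hV0 hVmeas hβ.le
      hγ₁0 hK₁ hgrow hr hα0 hosc_r ENNReal.toReal_nonneg hf n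
  have hgeo := summable_pow_div hα0 hαr.2 hr
  have hℓ : Summable ℓ := (hgeo.mul_left _).mul_right _
  have hdecay := abs_iterate_act_sub_integral_le hV0 hβ.le hμint hμinv hf hℓ0 hlip
  have hS : 1 ≤ ∑' n : ℕ, α_r ^ (n / r) := by
    simpa using hgeo.le_tsum 0 fun n _ => pow_nonneg hα0 _
  have hβW : 0 ≤ β * ∫ y, V y ∂μst := mul_nonneg hβ.le (integral_nonneg hV0)
  refine ⟨fun x => (hℓ.mul_right _).of_nonneg_of_le (fun _ => abs_nonneg _) (hdecay · x),
    tsum_iterate_act_sub_act_tsum hV0 hVmeas hgrow hf hℓ hdecay,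
    fun u₁ u₂ hm₁ hm₂ hw₁ hw₂ he₁ he₂ => exists_eq_add_const_of_sub_act_eq hV0 hVmeas hβ.le hgrow
      hαr.2 hosc_r hm₁ hm₂ hw₁ hw₂ fun x => (he₁ x).trans (he₂ x).symm,
    (3 + β * K₁ + γ₁) ^ r * (∑' n : ℕ, α_r ^ (n / r)) * (2 + β * ∫ y, V y ∂μst), by positivity,
    fun x => ?_⟩
  calc _ ≤ (∑' n, ℓ n) * (2 + β * ∫ y, V y ∂μst) * (1 + β * V x) :=
        abs_tsum_le_of_abs_le hℓ hℓ0 hβW (mul_nonneg hβ.le (hV0 x)) (hdecay · x)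
    _ = _ := by simp only [ℓ, tsum_mul_right, tsum_mul_left]; ring

/-- Existence, uniqueness up to constants, and a bound for the solution
of the Poisson equation, under the relaxed (`r`-step) conditions. -/
theorem poisson_equation_solution_relaxed
    {X : Type*} [MeasurableSpace X] (V : X → ℝ) (hVmeas : Measurable V)
    (hV0 : ∀ x, 0 ≤ V x) (β : ℝ) (hβ : 0 < β)
    (P : Kernel X X) [IsMarkovKernel P]
    (r : ℕ) (hr : 0 < r)
    (γr Kr : ℝ) (hγr : γr ∈ Set.Ioo (0:ℝ) 1) (hKr : 0 ≤ Kr)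
    (hdriftr : Drift (kpow P r) V γr Kr)
    (γ₁ K₁ : ℝ) (hγ₁ : 1 < γ₁) (hK₁ : 0 ≤ K₁) (hgrow : Drift P V γ₁ K₁)
    (α_r : ℝ) (hαr : α_r ∈ Set.Ioo γr 1)
    (hosc_r : ∀ φ : X → ℝ, Measurable φ → osc β V φ < ⊤ →
      osc β V ((act P)^[r] φ) ≤ ENNReal.ofReal α_r * osc β V φ)
    (hsig_r : ∀ (μ₁ μ₂ : Measure X) [IsProbabilityMeasure μ₁] [IsProbabilityMeasure μ₂],
      Integrable V μ₁ → Integrable V μ₂ →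
      sigmaB β V (μ₁.bind (kpow P r)) (μ₂.bind (kpow P r)) ≤ α_r * sigmaB β V μ₁ μ₂)
    (μst : Measure X) [IsProbabilityMeasure μst] (hμint : Integrable V μst)
    (hμinv : μst.bind P = μst)
    (hμuniq : ∀ (ν : Measure X) [IsProbabilityMeasure ν], Integrable V ν →
      ν.bind P = ν → ν = μst)
    (hμinv_r : μst.bind (kpow P r) = μst)
    (hμuniq_r : ∀ (ν : Measure X) [IsProbabilityMeasure ν], Integrable V ν →
      ν.bind (kpow P r) = ν → ν = μst)
    (f : X → ℝ) (hf : Measurable f) (hffin : osc β V f < ⊤) :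
    (∀ x, Summable fun n : ℕ => |(act P)^[n] f x - ∫ y, f y ∂μst|) ∧
    (∀ x, (∑' n : ℕ, ((act P)^[n] f x - ∫ y, f y ∂μst))
        - act P (fun z => ∑' n : ℕ, ((act P)^[n] f z - ∫ y, f y ∂μst)) x
        = f x - ∫ y, f y ∂μst) ∧
    (∀ u₁ u₂ : X → ℝ, Measurable u₁ → Measurable u₂ →
      wnorm β V u₁ < ⊤ → wnorm β V u₂ < ⊤ →
      (∀ x, u₁ x - act P u₁ x = f x - ∫ y, f y ∂μst) →
      (∀ x, u₂ x - act P u₂ x = f x - ∫ y, f y ∂μst) →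
      ∃ c : ℝ, ∀ x, u₂ x = u₁ x + c) ∧
    (∃ C : ℝ, 0 < C ∧ ∀ x, |∑' n : ℕ, ((act P)^[n] f x - ∫ y, f y ∂μst)| ≤
      C * (osc β V f).toReal * (1 + β * V x)) :=
  poisson_equation_solution_relaxed_general V hVmeas hV0 β hβ P r hr γr hγr γ₁ K₁ hγ₁ hK₁ hgrow α_r
    hαr hosc_r μst hμint hμinv f hf hffin

end PoissonPaper
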